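/- For Turing's combinator in the clocked λ-calculus: Y₁ f = η η f reduces in finitely many clocked steps to τ(τ(f (η η f))); hence for every n ≥ 1, Y₁ f ↠c τ²(f(τ²(f(⋯τ²(f (η η f))⋯)))) with n occurrences of f. -/

import Mathlib

/-- clocked λ-terms: λ-terms with an extra unary constructor τ -/
inductive CLam : Type
  | var : Nat → CLam
  | app : CLam → CLam → CLam
  | lam : CLam → CLam
  | tau : CLam → CLam
deriving DecidableEq

namespace CLam

def lift (d : Nat) : CLam → CLam
  | var n => if n < d then var n else var (n+1)
  | app M N => app (lift d M) (lift d N)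
  | lam M => lam (lift (d+1) M)
  | tau M => tau (lift d M)

def subst (k : Nat) (N : CLam) : CLam → CLam
  | var n => if n = k then N else if k < n then var (n-1) else var n
  | app A B => app (subst k N A) (subst k N B)
  | lam A => lam (subst (k+1) (lift 0 N) A)
  | tau A => tau (subst k N A)

/-- one-step clocked reduction: compatible closure of
    (λ.M)N → τ(M[0:=N]) and (τ M)N → τ(M N) -/
inductive CStep : CLam → CLam → Prop
  | beta (M N : CLam) : CStep (app (lam M) N) (tau (subst 0 N M))
  | tauApp (M N : CLam) : CStep (app (tau M) N) (tau (app M N))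
  | appL {M M'} (N) : CStep M M' → CStep (app M N) (app M' N)
  | appR (M) {N N'} : CStep N N' → CStep (app M N) (app M N')
  | lam {M M'} : CStep M M' → CStep (lam M) (lam M')
  | tau {M M'} : CStep M M' → CStep (tau M) (tau M')

abbrev CStar : CLam → CLam → Prop := Relation.ReflTransGen CStep

/-- n-fold τ -/
def tauN : Nat → CLam → CLam
  | 0, M => M
  | n+1, M => tau (tauN n M)

end CLam

open CLam

def fv : CLam := CLam.var 0
/-- η = λx.λf.f(xxf) -/
def eta : CLam :=
  CLam.lam (CLam.lam (CLam.app (CLam.var 0)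
    (CLam.app (CLam.app (CLam.var 1) (CLam.var 1)) (CLam.var 0))))
def Y1 : CLam := CLam.app eta eta

/-- g n = τ²(f(τ²(f(…τ²(f (ηη f))…)))) with n occurrences of f (g 0 = Y₁ f) -/
def g : Nat → CLam
  | 0 => CLam.app Y1 fv
  | n+1 => CLam.tau (CLam.tau (CLam.app fv (g n)))

namespace CLam

theorem CStar.tau {M M' : CLam} (h : CStar M M') : CStar (tau M) (tau M') :=
  h.lift CLam.tau fun _ _ => CStep.tau

theorem CStar.appR (F : CLam) {M M' : CLam} (h : CStar M M') : CStar (app F M) (app F M') :=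
  h.lift (app F) fun _ _ => CStep.appR F

end CLam

/- `η` is closed, so both substitutions below leave its copies untouched and the reducts are
`τ(λf. f (η η f))` and `F (η η F)` on the nose. -/
theorem cstar_Y1_app (F : CLam) : CStar (app Y1 F) (tau (tau (app F (app Y1 F)))) :=
  .head (.appL F (.beta _ eta)) <| .head (.tauApp _ F) <| .single (.tau (.beta _ F))

theorem cstar_g_succ (n : Nat) : CStar (g n) (g (n + 1)) := by
  induction n with
  | zero => exact cstar_Y1_app fv
  | succ n ih => exact (ih.appR fv).tau.tau

theorem cstar_g (n : Nat) : CStar (g 0) (g n) := by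
  induction n with
  | zero => exact .refl
  | succ n ih => exact ih.trans (cstar_g_succ n)

theorem turing_clocked :
    CStar (CLam.app Y1 fv) (CLam.tau (CLam.tau (CLam.app fv (CLam.app Y1 fv)))) ∧
    (∀ n : Nat, 1 ≤ n → CStar (CLam.app Y1 fv) (g n)) :=
  ⟨cstar_Y1_app fv, fun n _ => cstar_g n⟩
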